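/- arXiv:2110.10614 — 2 statements merged into one kernel-verified Lean document; each statement's English description precedes it below -/
import Mathlib

section
/- If two parameter vectors θ and θ' satisfy ‖θ - θ'‖_∞ ≤ δ, then for every action a, π_θ(a) ≥ (1 - 2δ) · π_θ'(a). -/
noncomputable def softmax {A : Type*} [Fintype A] (θ : A → ℝ) (a : A) : ℝ :=
  Real.exp (θ a) / ∑ a' : A, Real.exp (θ a')

open Real Finset

section Softmax

variable {A : Type*} [Fintype A]

theorem softmax_nonneg (θ : A → ℝ) (a : A) : 0 ≤ softmax θ a :=
  div_nonneg (exp_pos _).le (sum_nonneg fun _ _ => (exp_pos _).le)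

theorem sum_exp_pos (θ : A → ℝ) (a : A) : 0 < ∑ a' : A, exp (θ a') :=
  sum_pos (fun _ _ => exp_pos _) ⟨a, mem_univ a⟩

theorem sum_exp_le_exp_mul_sum_exp {ι : Type*} (s : Finset ι) {f g : ι → ℝ} {δ : ℝ}
    (h : ∀ i ∈ s, f i ≤ g i + δ) : ∑ i ∈ s, exp (f i) ≤ exp δ * ∑ i ∈ s, exp (g i) := by
  rw [mul_sum]
  refine sum_le_sum fun i hi => ?_
  rw [← exp_add, add_comm δ]
  exact exp_le_exp.2 (h i hi)

/-- Each logit moves by at most `δ`, so the numerator of `softmax` shrinks by at most `exp δ`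
and its normalising sum grows by at most `exp δ`. -/
theorem exp_neg_two_mul_mul_softmax_le {θ θ' : A → ℝ} {δ : ℝ}
    (h : ∀ a, |θ a - θ' a| ≤ δ) (a : A) :
    exp (-(2 * δ)) * softmax θ' a ≤ softmax θ a := by
  have hnum : exp (θ' a - δ) ≤ exp (θ a) :=
    exp_le_exp.2 (by linarith [(abs_le.1 (h a)).1])
  have hden : ∑ a' : A, exp (θ a') ≤ exp δ * ∑ a' : A, exp (θ' a') :=
    sum_exp_le_exp_mul_sum_exp _ fun i _ => by linarith [(abs_le.1 (h i)).2]
  have hshift : exp (θ' a - δ) = exp (-(2 * δ)) * exp (θ' a) * exp δ := by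
    rw [← exp_add, ← exp_add]
    ring_nf
  calc exp (-(2 * δ)) * softmax θ' a
      = exp (θ' a - δ) / (exp δ * ∑ a' : A, exp (θ' a')) := by
        rw [hshift, softmax, mul_comm (exp δ), mul_div_mul_right _ _ (exp_pos δ).ne',
          mul_div_assoc]
    _ ≤ softmax θ a := div_le_div₀ (exp_pos _).le hnum (sum_exp_pos θ a) hden

end Softmax

theorem softmax_lower_bound_general {A : Type*} [Fintype A]
    (θ θ' : A → ℝ) (δ : ℝ)
    (h : ∀ a, |θ a - θ' a| ≤ δ) :
    ∀ a, softmax θ a ≥ (1 - 2 * δ) * softmax θ' a := by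
  intro a
  have hlin : 1 - 2 * δ ≤ exp (-(2 * δ)) := by
    linarith [add_one_le_exp (-(2 * δ))]
  calc (1 - 2 * δ) * softmax θ' a ≤ exp (-(2 * δ)) * softmax θ' a :=
        mul_le_mul_of_nonneg_right hlin (softmax_nonneg θ' a)
    _ ≤ softmax θ a := exp_neg_two_mul_mul_softmax_le h a

theorem softmax_lower_bound {A : Type*} [Fintype A] [Nonempty A]
    (θ θ' : A → ℝ) (δ : ℝ)
    (h : ∀ a, |θ a - θ' a| ≤ δ) :
    ∀ a, softmax θ a ≥ (1 - 2 * δ) * softmax θ' a :=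
  softmax_lower_bound_general θ θ' δ h
end

section
/- In a congestion game with edge set E, load functions, and potential Φ(a) = Σ_e Σ_{k=1}^{l_e(a)} c_e(k) where l_e(a) is the number of players whose action uses edge e, for any player i and any two actions a_i, a_i' (with other players' actions a_{-i} fixed), Φ(a_i, a_{-i}) - Φ(a_i', a_{-i}) = C_i(a_i, a_{-i}) - C_i(a_i', a_{-i}), where C_i(a) = Σ_{e ∈ a_i} c_e(l_e(a)) is player i's cost. -/
/-!
Only player `i` distinguishes `(b, a₋ᵢ)` from `(∅, a₋ᵢ)`: each edge `e ∈ b` carries one more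
unit of load, so its inner sum gains exactly the top term `c e (l_e)`, paid by player `i`. Hence
`Φ(b, a₋ᵢ) = Φ(∅, a₋ᵢ) + Cᵢ(b, a₋ᵢ)`, and subtracting this for `b = aᵢ` and `b = aᵢ'` gives the claim.
-/

open Finset

variable {E : Type*} [Fintype E] [DecidableEq E]

/-- Load of edge `e` under joint action `a`. -/
def load (n : ℕ) (a : Fin n → Finset E) (e : E) : ℕ :=
  (Finset.univ.filter fun i : Fin n => e ∈ a i).card

/-- Cost of player `i` under joint action `a`. -/
def playerCost (n : ℕ) (c : E → ℕ → ℝ) (a : Fin n → Finset E) (i : Fin n) : ℝ :=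
  ∑ e ∈ a i, c e (load n a e)

/-- Rosenthal potential. -/
def rosenthalPotential (n : ℕ) (c : E → ℕ → ℝ) (a : Fin n → Finset E) : ℝ :=
  ∑ e : E, ∑ k ∈ Finset.Icc 1 (load n a e), c e k

lemma rosenthalPotential_update {n : ℕ} (c : E → ℕ → ℝ) (a : Fin n → Finset E) (i : Fin n)
    (b : Finset E) :
    rosenthalPotential n c (Function.update a i b) =
      rosenthalPotential n c (Function.update a i ∅) + playerCost n c (Function.update a i b) i := by
  have load_eq (s : Finset E) (e : E) : load n (Function.update a i s) e =
      (if e ∈ s then 1 else 0) + ∑ j ∈ univ \ {i}, if e ∈ a j then 1 else 0 := by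
    rw [load, card_filter, ← sum_update_of_mem (mem_univ i)]
    refine sum_congr rfl fun j _ => ?_
    rcases eq_or_ne j i with rfl | hj <;> simp [*]
  rw [rosenthalPotential, rosenthalPotential, playerCost, Function.update_self,
    ← sum_ite_mem_eq b, ← sum_add_distrib]
  refine sum_congr rfl fun e _ => ?_
  by_cases he : e ∈ b
  · simp only [load_eq, he, notMem_empty, if_true, if_false, zero_add, add_comm 1,
      sum_Icc_succ_top (Nat.le_add_left 1 _)]
  · simp [load_eq, he]

theorem rosenthal_potential_property (n : ℕ) (c : E → ℕ → ℝ)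
    (a : Fin n → Finset E) (i : Fin n) (ai ai' : Finset E) :
    rosenthalPotential n c (Function.update a i ai) -
      rosenthalPotential n c (Function.update a i ai') =
    playerCost n c (Function.update a i ai) i -
      playerCost n c (Function.update a i ai') i := by
  rw [rosenthalPotential_update c a i ai, rosenthalPotential_update c a i ai']
  ring
end
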